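/- If there exist an almost 2-perfect maximum 8-cycle packing of K_r with a 1-factor leave, an almost 2-perfect maximum 8-cycle packing of K_s with a 1-factor leave, and an almost 2-perfect 8-cycle decomposition of K_{r,s}, then there exists an almost 2-perfect 8-cycle packing of K_{r+s} whose leave is a 1-factor (perfect matching) of K_{r+s}. -/

import Mathlib

open Finset

/-- The edge set of the closed walk visiting `f 0, f 1, ..., f (m-1)` and back to `f 0`. -/
def cycleEdges {V : Type*} [DecidableEq V] (m : ℕ) (f : ℕ → V) : Finset (Sym2 V) :=
  (Finset.range m).image (fun i => s(f i, f ((i + 1) % m)))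

/-- `f` describes an `m`-cycle: its first `m` values are pairwise distinct. -/
def IsCycleMap {V : Type*} (m : ℕ) (f : ℕ → V) : Prop :=
  Set.InjOn f ↑(Finset.range m)

/-- Vertex set of the cycle described by `f`. -/
def cycleVerts {V : Type*} [DecidableEq V] (m : ℕ) (f : ℕ → V) : Finset V :=
  (Finset.range m).image f

/-- `g` is an inside `m`-cycle of `f`: same vertex set and edge-disjoint. -/
def IsInsideOf {V : Type*} [DecidableEq V] (m : ℕ) (g f : ℕ → V) : Prop :=
  IsCycleMap m g ∧ cycleVerts m g = cycleVerts m f ∧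
    Disjoint (cycleEdges m f) (cycleEdges m g)

/-- Edge set of the complete graph on `V`. -/
def kEdges (V : Type*) [Fintype V] [DecidableEq V] : Finset (Sym2 V) :=
  Finset.univ.filter (fun e => ¬ e.IsDiag)

/-- Edge set of the complete bipartite graph `K_{r,s}`. -/
def bipEdges (r s : ℕ) : Finset (Sym2 (Fin r ⊕ Fin s)) :=
  (Finset.univ : Finset (Fin r × Fin s)).image (fun p => s(Sum.inl p.1, Sum.inr p.2))

/-- `E` admits an almost 2-perfect 8-cycle decomposition. -/
def HasA2PDecomp {V : Type*} [DecidableEq V] (E : Finset (Sym2 V)) : Prop :=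
  ∃ (k : ℕ) (c c' : Fin k → ℕ → V),
    (∀ i, IsCycleMap 8 (c i)) ∧
    (∀ i j, i ≠ j → Disjoint (cycleEdges 8 (c i)) (cycleEdges 8 (c j))) ∧
    Finset.univ.sup (fun i => cycleEdges 8 (c i)) = E ∧
    (∀ i, IsInsideOf 8 (c' i) (c i)) ∧
    (∀ i j, i ≠ j → Disjoint (cycleEdges 8 (c' i)) (cycleEdges 8 (c' j))) ∧
    Finset.univ.sup (fun i => cycleEdges 8 (c' i)) = E

/-- `E` admits an almost 2-perfect 8-cycle packing with leave `L`. -/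
def HasA2PPacking {V : Type*} [DecidableEq V] (E L : Finset (Sym2 V)) : Prop :=
  L ⊆ E ∧ ∃ (k : ℕ) (c c' : Fin k → ℕ → V),
    (∀ i, IsCycleMap 8 (c i)) ∧
    (∀ i j, i ≠ j → Disjoint (cycleEdges 8 (c i)) (cycleEdges 8 (c j))) ∧
    Finset.univ.sup (fun i => cycleEdges 8 (c i)) = E \ L ∧
    (∀ i, IsInsideOf 8 (c' i) (c i)) ∧
    (∀ i j, i ≠ j → Disjoint (cycleEdges 8 (c' i)) (cycleEdges 8 (c' j))) ∧
    Finset.univ.sup (fun i => cycleEdges 8 (c' i)) = E \ L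

/-- A 1-factor (perfect matching) as a set of edges. -/
def IsOneFactor {V : Type*} (L : Finset (Sym2 V)) : Prop :=
  (∀ e ∈ L, ¬ e.IsDiag) ∧ ∀ v : V, ∃! e, e ∈ L ∧ v ∈ e

/-!
The vertex set of `K_{r+s}` is `Fin r ⊕ Fin s`, whose edges split into the edges inside
`Fin r`, the edges inside `Fin s` and the bipartite edges. Cycles are carried along injective
vertex maps together with their inside cycles, so the two packings and the decomposition of
`K_{r,s}` live on pairwise disjoint edge sets; their union is an almost 2-perfect packing
whose leave is the union of the two 1-factors, which is a 1-factor of `K_{r+s}`.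
-/

open Function

section DisjointUnion

variable {ι κ α β : Type*} [Fintype ι] [Fintype κ] [DecidableEq α] [DecidableEq β]

def IsDisjointUnion (A : ι → Finset α) (F : Finset α) : Prop :=
  Pairwise (Disjoint on A) ∧ univ.sup A = F

namespace IsDisjointUnion

variable {A : ι → Finset α} {B : κ → Finset α} {F G : Finset α}

lemma subset (h : IsDisjointUnion A F) (i : ι) : A i ⊆ F :=
  h.2 ▸ le_sup (mem_univ i)

lemma comp_equiv (h : IsDisjointUnion A F) (e : κ ≃ ι) : IsDisjointUnion (A ∘ e) F :=
  ⟨h.1.comp_of_injective e.injective,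
    h.2 ▸ (sup_map _ _ _).symm.trans (congrArg (sup · A) (map_univ_equiv e))⟩

lemma image (h : IsDisjointUnion A F) {g : α → β} (hg : Injective g) :
    IsDisjointUnion (fun i => (A i).image g) (F.image g) :=
  ⟨h.1.mono fun _ _ hij => (disjoint_image hg).2 hij, by
    rw [← h.2, sup_eq_biUnion, sup_eq_biUnion, biUnion_image]⟩

lemma sumElim (hA : IsDisjointUnion A F) (hB : IsDisjointUnion B G) (hFG : Disjoint F G) :
    IsDisjointUnion (Sum.elim A B) (F ∪ G) := by
  refine ⟨?_, by rw [← univ_disjSum_univ, sup_disjSum, ← hA.2, ← hB.2]; rfl⟩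
  rintro (i | i) (j | j) hij
  · exact hA.1 (ne_of_apply_ne Sum.inl hij)
  · exact hFG.mono (hA.subset i) (hB.subset j)
  · exact (hFG.mono (hA.subset j) (hB.subset i)).symm
  · exact hB.1 (ne_of_apply_ne Sum.inr hij)

end IsDisjointUnion

end DisjointUnion

section Cycles

variable {V W : Type*} {m : ℕ} {φ : V → W}

lemma IsCycleMap.comp {f : ℕ → V} (hφ : Injective φ) (hf : IsCycleMap m f) :
    IsCycleMap m (φ ∘ f) :=
  hφ.comp_injOn hf

variable [DecidableEq V] [DecidableEq W]

lemma cycleEdges_comp (m : ℕ) (φ : V → W) (f : ℕ → V) :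
    cycleEdges m (φ ∘ f) = (cycleEdges m f).image (Sym2.map φ) := by
  simp [cycleEdges, image_image, comp_def]

lemma cycleVerts_comp (m : ℕ) (φ : V → W) (f : ℕ → V) :
    cycleVerts m (φ ∘ f) = (cycleVerts m f).image φ := by
  simp [cycleVerts, image_image]

lemma IsInsideOf.comp {g f : ℕ → V} (hφ : Injective φ) (h : IsInsideOf m g f) :
    IsInsideOf m (φ ∘ g) (φ ∘ f) :=
  ⟨h.1.comp hφ, by rw [cycleVerts_comp, cycleVerts_comp, h.2.1], by
    rw [cycleEdges_comp, cycleEdges_comp]; exact (disjoint_image (Sym2.map.injective hφ)).2 h.2.2⟩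

/-- Indexed by an arbitrary finite type, so that two systems can be glued along `Sum.elim`. -/
def IsA2PSystem {ι : Type*} [Fintype ι] (m : ℕ) (c c' : ι → ℕ → V) (F : Finset (Sym2 V)) :
    Prop :=
  (∀ i, IsCycleMap m (c i)) ∧ IsDisjointUnion (fun i => cycleEdges m (c i)) F ∧
    (∀ i, IsInsideOf m (c' i) (c i)) ∧ IsDisjointUnion (fun i => cycleEdges m (c' i)) F

namespace IsA2PSystem

variable {ι κ : Type*} [Fintype ι] [Fintype κ] {c c' : ι → ℕ → V} {d d' : κ → ℕ → V}
  {F G : Finset (Sym2 V)}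

lemma comp_equiv (h : IsA2PSystem m c c' F) (e : κ ≃ ι) : IsA2PSystem m (c ∘ e) (c' ∘ e) F :=
  ⟨fun i => h.1 (e i), h.2.1.comp_equiv e, fun i => h.2.2.1 (e i), h.2.2.2.comp_equiv e⟩

lemma map (h : IsA2PSystem m c c' F) (hφ : Injective φ) :
    IsA2PSystem m (fun i => φ ∘ c i) (fun i => φ ∘ c' i) (F.image (Sym2.map φ)) := by
  have hφ₂ := Sym2.map.injective hφ
  exact ⟨fun i => (h.1 i).comp hφ, by simpa only [cycleEdges_comp] using h.2.1.image hφ₂,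
    fun i => (h.2.2.1 i).comp hφ, by simpa only [cycleEdges_comp] using h.2.2.2.image hφ₂⟩

lemma sumElim (hc : IsA2PSystem m c c' F) (hd : IsA2PSystem m d d' G) (hFG : Disjoint F G) :
    IsA2PSystem m (Sum.elim c d) (Sum.elim c' d') (F ∪ G) := by
  refine ⟨Sum.rec hc.1 hd.1, ?_, Sum.rec hc.2.2.1 hd.2.2.1, ?_⟩
  · convert hc.2.1.sumElim hd.2.1 hFG using 2 with i
    cases i <;> rfl
  · convert hc.2.2.2.sumElim hd.2.2.2 hFG using 2 with i
    cases i <;> rfl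

end IsA2PSystem

lemma hasA2PPacking_iff {E L : Finset (Sym2 V)} :
    HasA2PPacking E L ↔ L ⊆ E ∧ ∃ (k : ℕ) (c c' : Fin k → ℕ → V), IsA2PSystem 8 c c' (E \ L) :=
  ⟨fun ⟨hL, k, c, c', hc, hd, hs, hi, hd', hs'⟩ => ⟨hL, k, c, c', hc, ⟨hd, hs⟩, hi, hd', hs'⟩,
    fun ⟨hL, k, c, c', hc, ⟨hd, hs⟩, hi, hd', hs'⟩ => ⟨hL, k, c, c', hc, hd, hs, hi, hd', hs'⟩⟩

lemma HasA2PDecomp.hasA2PPacking_empty {E : Finset (Sym2 V)} (h : HasA2PDecomp E) :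
    HasA2PPacking E ∅ :=
  ⟨empty_subset E, by rw [sdiff_empty]; exact h⟩

lemma HasA2PPacking.image {E L : Finset (Sym2 V)} (h : HasA2PPacking E L) (hφ : Injective φ) :
    HasA2PPacking (E.image (Sym2.map φ)) (L.image (Sym2.map φ)) := by
  obtain ⟨hL, k, c, c', hsys⟩ := hasA2PPacking_iff.1 h
  refine hasA2PPacking_iff.2 ⟨image_subset_image hL, k, fun i => φ ∘ c i, fun i => φ ∘ c' i, ?_⟩
  rw [← image_sdiff_of_injOn (Sym2.map.injective hφ).injOn hL]
  exact hsys.map hφ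

lemma HasA2PPacking.union {E₁ E₂ L₁ L₂ : Finset (Sym2 V)} (h₁ : HasA2PPacking E₁ L₁)
    (h₂ : HasA2PPacking E₂ L₂) (hE : Disjoint E₁ E₂) :
    HasA2PPacking (E₁ ∪ E₂) (L₁ ∪ L₂) := by
  obtain ⟨hL₁, k₁, c₁, c₁', hsys₁⟩ := hasA2PPacking_iff.1 h₁
  obtain ⟨hL₂, k₂, c₂, c₂', hsys₂⟩ := hasA2PPacking_iff.1 h₂
  have hleave : (E₁ ∪ E₂) \ (L₁ ∪ L₂) = E₁ \ L₁ ∪ E₂ \ L₂ := by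
    have := disjoint_left.1 hE
    ext e
    simp only [mem_union, mem_sdiff]
    grind
  refine hasA2PPacking_iff.2 ⟨union_subset_union hL₁ hL₂, k₁ + k₂,
    Sum.elim c₁ c₂ ∘ finSumFinEquiv.symm, Sum.elim c₁' c₂' ∘ finSumFinEquiv.symm, ?_⟩
  rw [hleave]
  exact (hsys₁.sumElim hsys₂ (hE.mono sdiff_subset sdiff_subset)).comp_equiv finSumFinEquiv.symm

end Cycles

section CompleteGraph

variable {V W : Type*} [DecidableEq V] [DecidableEq W]

lemma mem_kEdges [Fintype V] {e : Sym2 V} : e ∈ kEdges V ↔ ¬ e.IsDiag := by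
  simp [kEdges]

lemma kEdges_image_equiv [Fintype V] [Fintype W] (φ : V ≃ W) :
    (kEdges V).image (Sym2.map φ) = kEdges W := by
  ext e
  rw [mem_image, mem_kEdges]
  refine ⟨fun ⟨e', he', he⟩ => he ▸ (Sym2.isDiag_map φ.injective).not.2 (mem_kEdges.1 he'),
    fun he => ⟨e.map φ.symm, mem_kEdges.2 ((Sym2.isDiag_map φ.symm.injective).not.2 he), ?_⟩⟩
  simp [Sym2.map_map]

lemma disjoint_image_inl_image_inr (A : Finset (Sym2 V)) (B : Finset (Sym2 W)) :
    Disjoint (A.image (Sym2.map Sum.inl)) (B.image (Sym2.map Sum.inr)) := by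
  simp only [disjoint_left, mem_image, not_exists, not_and]
  rintro _ ⟨a, -, rfl⟩ b -
  induction a using Sym2.ind
  induction b using Sym2.ind
  simp

lemma disjoint_image_union_bipEdges {r s : ℕ} (A : Finset (Sym2 (Fin r)))
    (B : Finset (Sym2 (Fin s))) :
    Disjoint (A.image (Sym2.map Sum.inl) ∪ B.image (Sym2.map Sum.inr)) (bipEdges r s) := by
  simp only [disjoint_left, bipEdges, mem_union, mem_image, mem_univ, true_and, not_exists]
  rintro _ (⟨a, -, rfl⟩ | ⟨a, -, rfl⟩) ⟨i, j⟩ <;> induction a using Sym2.ind <;> simp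

lemma kEdges_sum (r s : ℕ) :
    kEdges (Fin r ⊕ Fin s) = (kEdges (Fin r)).image (Sym2.map Sum.inl) ∪
      (kEdges (Fin s)).image (Sym2.map Sum.inr) ∪ bipEdges r s := by
  ext e
  induction e using Sym2.ind with | _ x y => ?_
  rcases x with x | x <;> rcases y with y | y <;>
    simp [bipEdges, mem_kEdges, Sym2.exists, and_or_left, exists_or, eq_comm]

end CompleteGraph

section OneFactor

variable {V W : Type*} {φ : V → W} {L : Finset (Sym2 V)}

lemma Sym2.apply_mem_map_iff (hφ : Injective φ) {v : V} {e : Sym2 V} :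
    φ v ∈ e.map φ ↔ v ∈ e := by
  simp [Sym2.mem_map, hφ.eq_iff]

variable [DecidableEq W]

lemma existsUnique_mem_image_map_iff (hφ : Injective φ) (v : V) :
    (∃! e, e ∈ L.image (Sym2.map φ) ∧ φ v ∈ e) ↔ ∃! e, e ∈ L ∧ v ∈ e := by
  constructor
  · rintro ⟨_, ⟨he, hv⟩, huniq⟩
    obtain ⟨e, heL, rfl⟩ := mem_image.1 he
    refine ⟨e, ⟨heL, (Sym2.apply_mem_map_iff hφ).1 hv⟩, fun e' he' => Sym2.map.injective hφ ?_⟩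
    exact huniq _ ⟨mem_image_of_mem _ he'.1, (Sym2.apply_mem_map_iff hφ).2 he'.2⟩
  · rintro ⟨e, ⟨he, hv⟩, huniq⟩
    refine ⟨e.map φ, ⟨mem_image_of_mem _ he, (Sym2.apply_mem_map_iff hφ).2 hv⟩, ?_⟩
    rintro _ ⟨he', hv'⟩
    obtain ⟨e', heL', rfl⟩ := mem_image.1 he'
    rw [huniq e' ⟨heL', (Sym2.apply_mem_map_iff hφ).1 hv'⟩]

lemma not_isDiag_of_mem_image_map (hφ : Injective φ) (hL : ∀ e ∈ L, ¬ e.IsDiag) :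
    ∀ e ∈ L.image (Sym2.map φ), ¬ e.IsDiag := by
  simpa [Sym2.isDiag_map hφ] using hL

lemma IsOneFactor.image_equiv (h : IsOneFactor L) (φ : V ≃ W) :
    IsOneFactor (L.image (Sym2.map φ)) :=
  ⟨not_isDiag_of_mem_image_map φ.injective h.1, fun w => by
    simpa using (existsUnique_mem_image_map_iff φ.injective (φ.symm w)).2 (h.2 _)⟩

lemma existsUnique_mem_union_iff_of_forall_not {α : Type*} [DecidableEq α] {A B : Finset α}
    {p : α → Prop} (hB : ∀ e ∈ B, ¬ p e) :
    (∃! e, e ∈ A ∪ B ∧ p e) ↔ ∃! e, e ∈ A ∧ p e :=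
  existsUnique_congr fun e => by
    rw [mem_union]
    exact ⟨fun ⟨he, hp⟩ => ⟨he.resolve_right fun heB => hB e heB hp, hp⟩,
      fun ⟨he, hp⟩ => ⟨Or.inl he, hp⟩⟩

lemma IsOneFactor.sum {L' : Finset (Sym2 W)} [DecidableEq V] (h : IsOneFactor L)
    (h' : IsOneFactor L') :
    IsOneFactor (L.image (Sym2.map Sum.inl) ∪ L'.image (Sym2.map Sum.inr)) := by
  refine ⟨fun e he => (mem_union.1 he).elim
    (not_isDiag_of_mem_image_map Sum.inl_injective h.1 e)
    (not_isDiag_of_mem_image_map Sum.inr_injective h'.1 e), ?_⟩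
  rintro (v | w)
  · rw [existsUnique_mem_union_iff_of_forall_not (by simp [Sym2.mem_map]),
      existsUnique_mem_image_map_iff Sum.inl_injective]
    exact h.2 v
  · rw [union_comm, existsUnique_mem_union_iff_of_forall_not (by simp [Sym2.mem_map]),
      existsUnique_mem_image_map_iff Sum.inr_injective]
    exact h'.2 w

end OneFactor

/-- Combining A2P maximum packings of `K_r` and `K_s` with 1-factor leaves and an A2P
decomposition of `K_{r,s}` gives an A2P packing of `K_{r+s}` with a 1-factor leave. -/
theorem a2p_bipartite_glue (r s : ℕ)
    (h1 : ∃ L : Finset (Sym2 (Fin r)), IsOneFactor L ∧ HasA2PPacking (kEdges (Fin r)) L)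
    (h2 : ∃ L : Finset (Sym2 (Fin s)), IsOneFactor L ∧ HasA2PPacking (kEdges (Fin s)) L)
    (h3 : HasA2PDecomp (bipEdges r s)) :
    ∃ L : Finset (Sym2 (Fin (r + s))), IsOneFactor L ∧
      HasA2PPacking (kEdges (Fin (r + s))) L := by
  obtain ⟨L₁, hL₁, hP₁⟩ := h1
  obtain ⟨L₂, hL₂, hP₂⟩ := h2
  have hP : HasA2PPacking (kEdges (Fin r ⊕ Fin s))
      (L₁.image (Sym2.map Sum.inl) ∪ L₂.image (Sym2.map Sum.inr)) := by
    have := ((hP₁.image Sum.inl_injective).union (hP₂.image Sum.inr_injective)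
      (disjoint_image_inl_image_inr _ _)).union h3.hasA2PPacking_empty
      (disjoint_image_union_bipEdges _ _)
    rwa [union_empty, ← kEdges_sum] at this
  refine ⟨_, (hL₁.sum hL₂).image_equiv finSumFinEquiv, ?_⟩
  simpa only [kEdges_image_equiv] using hP.image finSumFinEquiv.injective
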